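/- (Edgeworth swaption price formula.) For all reals ν, B, c, μ3, μ4, the Edgeworth price PS₂ := ν·B·∫_c^∞ (z − c) g₂(z) dz satisfies PS₂ = PS₁ + ν·B·φ(c)·(μ3²/72)·(c⁴ − 6c² + 3), where PS₁ := ν·B·∫_c^∞ (z − c) g₁(z) dz is the Gram–Charlier price. -/

import Mathlib

open MeasureTheory Real Set

/-- The standard normal density `φ(z) = (2π)^(−1/2) exp(−z²/2)`. -/
noncomputable def φ (z : ℝ) : ℝ := (Real.sqrt (2 * Real.pi))⁻¹ * Real.exp (-z ^ 2 / 2)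

/-- The Hermite polynomials defined by `H n z * φ z = φ⁽ⁿ⁾ z`. -/
noncomputable def H (n : ℕ) (z : ℝ) : ℝ := iteratedDeriv n φ z / φ z

/-- The fourth-order Gram–Charlier density with skewness `μ3` and kurtosis `μ4`. -/
noncomputable def g₁ (μ3 μ4 z : ℝ) : ℝ :=
  φ z * (1 - μ3 / 6 * H 3 z + (μ4 - 3) / 24 * H 4 z)

/-- The fourth-order Edgeworth density with skewness `μ3` and kurtosis `μ4`. -/
noncomputable def g₂ (μ3 μ4 z : ℝ) : ℝ :=
  g₁ μ3 μ4 z + φ z * (μ3 ^ 2 / 72) * H 6 z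

/-!
The Edgeworth and Gram–Charlier densities differ by `(μ3² / 72) φ⁽⁶⁾`. For any `n`,
`z ↦ (z - c) φ⁽ⁿ⁺¹⁾(z) - φ⁽ⁿ⁾(z)` is an antiderivative of `(z - c) φ⁽ⁿ⁺²⁾(z)` that vanishes at `+∞`,
because `φ⁽ᵏ⁾ = (-1)ᵏ Heₖ φ` has Gaussian decay; hence `∫_c^∞ (z - c) φ⁽ⁿ⁺²⁾ = φ⁽ⁿ⁾(c)`.
With `n = 4` and `He₄(c) = c⁴ - 6c² + 3` this is the correction term.
-/

open Filter Topology Polynomial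

theorem integral_Ioi_sub_mul_of_hasDerivAt {f f' f'' : ℝ → ℝ} {c : ℝ}
    (hf : ∀ z ∈ Ici c, HasDerivAt f (f' z) z) (hf' : ∀ z ∈ Ici c, HasDerivAt f' (f'' z) z)
    (hint : IntegrableOn (fun z => (z - c) * f'' z) (Ioi c))
    (hlim : Tendsto (fun z => (z - c) * f' z - f z) atTop (𝓝 0)) :
    ∫ z in Ioi c, (z - c) * f'' z = f c := by
  have hderiv : ∀ z ∈ Ici c,
      HasDerivAt (fun z => (z - c) * f' z - f z) ((z - c) * f'' z) z := fun z hz => by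
    have h : HasDerivAt (fun z => (z - c) * f' z - f z) (1 * f' z + (z - c) * f'' z - f' z) z :=
      (((hasDerivAt_id' z).sub_const c).mul (hf' z hz)).sub (hf z hz)
    exact h.congr_deriv (by ring)
  rw [integral_Ioi_of_hasDerivAt_of_tendsto' hderiv hint hlim]
  simp

lemma φ_pos (z : ℝ) : 0 < φ z := by
  unfold φ; positivity

lemma contDiff_φ : ContDiff ℝ ⊤ φ := by
  unfold φ; fun_prop

lemma iteratedDeriv_φ (n : ℕ) (z : ℝ) :
    iteratedDeriv n φ z = (-1) ^ n * aeval z (hermite n) * φ z := by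
  have hφ : φ = fun y => (Real.sqrt (2 * Real.pi))⁻¹ * Real.exp (-(y ^ 2 / 2)) := by
    funext y; rw [φ, neg_div]
  rw [hφ, iteratedDeriv_const_mul_field, iteratedDeriv_eq_iterate,
    deriv_gaussian_eq_hermite_mul_gaussian]
  ring

lemma H_mul_φ (n : ℕ) (z : ℝ) : H n z * φ z = iteratedDeriv n φ z :=
  div_mul_cancel₀ _ (φ_pos z).ne'

lemma isLittleO_eval_mul_φ (p : ℝ[X]) :
    (fun z => p.eval z * φ z) =o[atTop] fun z => Real.exp (-(1 / 2) * z) := by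
  induction p using Polynomial.induction_on' with
  | add p q hp hq => simpa [add_mul] using hp.add hq
  | monomial n a =>
    have h := (rpow_mul_exp_neg_mul_sq_isLittleO_exp_neg (b := 1 / 2) (by norm_num) n).const_mul_left
      (a * (Real.sqrt (2 * Real.pi))⁻¹)
    refine h.congr_left fun z => ?_
    simp only [eval_monomial, rpow_natCast, φ]
    ring_nf

lemma isLittleO_eval_mul_iteratedDeriv_φ (p : ℝ[X]) (n : ℕ) :
    (fun z => p.eval z * iteratedDeriv n φ z) =o[atTop] fun z => Real.exp (-(1 / 2) * z) := by
  refine ((isLittleO_eval_mul_φ (p * (hermite n).map (Int.castRingHom ℝ))).const_mul_left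
    ((-1) ^ n)).congr_left fun z => ?_
  simp only [iteratedDeriv_φ, eval_mul, eval_map, aeval_def, algebraMap_int_eq]
  ring

lemma integrableOn_Ioi_eval_mul_iteratedDeriv_φ (p : ℝ[X]) (n : ℕ) (c : ℝ) :
    IntegrableOn (fun z => p.eval z * iteratedDeriv n φ z) (Ioi c) :=
  integrable_of_isBigO_exp_neg (by norm_num)
    (p.continuous.mul (contDiff_φ.continuous_iteratedDeriv n (by simp))).continuousOn
    (isLittleO_eval_mul_iteratedDeriv_φ p n).isBigO

lemma integrableOn_Ioi_sub_mul_iteratedDeriv_φ (n : ℕ) (c : ℝ) :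
    IntegrableOn (fun z => (z - c) * iteratedDeriv n φ z) (Ioi c) := by
  have h := integrableOn_Ioi_eval_mul_iteratedDeriv_φ (X - C c) n c
  simp only [eval_sub, eval_X, eval_C] at h
  exact h

lemma integral_Ioi_sub_mul_iteratedDeriv_φ (n : ℕ) (c : ℝ) :
    ∫ z in Ioi c, (z - c) * iteratedDeriv (n + 2) φ z = iteratedDeriv n φ c := by
  have hderiv (k : ℕ) (z : ℝ) : HasDerivAt (iteratedDeriv k φ) (iteratedDeriv (k + 1) φ z) z := by
    rw [iteratedDeriv_succ]
    exact (contDiff_φ.differentiable_iteratedDeriv k (by simp) z).hasDerivAt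
  refine integral_Ioi_sub_mul_of_hasDerivAt (fun z _ => hderiv n z)
    (fun z _ => hderiv (n + 1) z) ?_ ?_
  · exact integrableOn_Ioi_sub_mul_iteratedDeriv_φ (n + 2) c
  · have h := (isLittleO_eval_mul_iteratedDeriv_φ (X - C c) (n + 1)).sub
      (isLittleO_eval_mul_iteratedDeriv_φ 1 n)
    simp only [eval_sub, eval_X, eval_C, eval_one, one_mul] at h
    exact h.trans_tendsto
      (tendsto_exp_atBot.comp (tendsto_id.const_mul_atTop_of_neg (by norm_num)))

lemma iteratedDeriv_four_φ (z : ℝ) : iteratedDeriv 4 φ z = (z ^ 4 - 6 * z ^ 2 + 3) * φ z := by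
  rw [iteratedDeriv_φ]
  congr 1
  simp [hermite_succ]
  ring

lemma integrableOn_Ioi_sub_mul_g₁ (c μ3 μ4 : ℝ) :
    IntegrableOn (fun z => (z - c) * g₁ μ3 μ4 z) (Ioi c) := by
  have h (k : ℕ) := integrableOn_Ioi_sub_mul_iteratedDeriv_φ k c
  refine (((h 0).sub ((h 3).const_mul (μ3 / 6))).add ((h 4).const_mul ((μ4 - 3) / 24))).congr_fun
    (fun z _ => ?_) measurableSet_Ioi
  simp only [Pi.add_apply, Pi.sub_apply, g₁, iteratedDeriv_zero, ← H_mul_φ 3, ← H_mul_φ 4]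
  ring

/-- Edgeworth swaption price formula: the Edgeworth price equals the Gram–Charlier
price plus an explicit additional skewness correction. -/
theorem edgeworth_price (ν B c μ3 μ4 : ℝ) :
    ν * B * (∫ z in Set.Ioi c, (z - c) * g₂ μ3 μ4 z) =
      ν * B * (∫ z in Set.Ioi c, (z - c) * g₁ μ3 μ4 z) +
        ν * B * φ c * (μ3 ^ 2 / 72) * (c ^ 4 - 6 * c ^ 2 + 3) := by
  have hsplit (z : ℝ) : (z - c) * g₂ μ3 μ4 z =
      (z - c) * g₁ μ3 μ4 z + μ3 ^ 2 / 72 * ((z - c) * iteratedDeriv 6 φ z) := by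
    rw [g₂, ← H_mul_φ]
    ring
  simp_rw [hsplit]
  rw [integral_add (integrableOn_Ioi_sub_mul_g₁ c μ3 μ4)
    ((integrableOn_Ioi_sub_mul_iteratedDeriv_φ 6 c).const_mul _), integral_const_mul,
    integral_Ioi_sub_mul_iteratedDeriv_φ, iteratedDeriv_four_φ]
  ring
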